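/- arXiv:1905.13743 — 2 statements merged into one kernel-verified Lean document; each statement's English description precedes it below -/
import Mathlib

section
/- In the blocking G/G/1/1 model with S exponentially distributed with rate μ > 0, the average age satisfies Δᵇ = E[G²]/(2E[G]) + 1/μ = E[Y²]/(2E[Y]) + E[Y·e^{-μY}]/(1 − E[e^{-μY}]) + 1/μ. -/
open MeasureTheory ProbabilityTheory Real

open Finset
open scoped ENNReal

/-!
Since the service time `S` is exponential and independent of the interarrival times, the event
`{A_j ≤ S}` can be traded for the weight `e^{-μ A_j} = ∏_{l<j} e^{-μ Y_l}`, which factorises over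
the i.i.d. `Y_l`. With `q = E[e^{-μY}] < 1` this gives `ℙ(A_n ≤ S) = qⁿ → 0`, so `K` is a.s. finite
and `j < K ↔ A_j ≤ S`. Hence `G = ∑_j 1{A_j ≤ S} Y_j` and
`G² = ∑_j 1{A_j ≤ S} (Y_j² + 2 ∑_{i<j} Y_i Y_j)`; integrating term by term (in `ℝ≥0∞`, where
no integrability is needed) gives `E[G] = E[Y]/(1-q)` and
`E[G²] = E[Y²]/(1-q) + 2 E[Y e^{-μY}] E[Y]/(1-q)²`, whose ratio is the claimed formula.
-/

noncomputable def expTail (r x : ℝ) : ℝ≥0∞ := ENNReal.ofReal (exp (-(r * x)))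

lemma measurable_expTail (r : ℝ) : Measurable (expTail r) :=
  (measurable_const.mul measurable_id).neg.exp.ennreal_ofReal

lemma expTail_sum {ι : Type*} (r : ℝ) (s : Finset ι) (x : ι → ℝ) :
    expTail r (∑ i ∈ s, x i) = ∏ i ∈ s, expTail r (x i) := by
  simp only [expTail, mul_sum, ← sum_neg_distrib, exp_sum]
  exact ENNReal.ofReal_prod_of_nonneg fun i _ => (exp_pos _).le

lemma expTail_lt_one {r x : ℝ} (hr : 0 < r) (hx : 0 < x) : expTail r x < 1 :=
  ENNReal.ofReal_lt_one.2 (exp_lt_one_iff.2 (by nlinarith))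

lemma ENNReal.inv_one_sub_ofReal {q : ℝ} (hq0 : 0 ≤ q) (hq : 0 < 1 - q) :
    (1 - ENNReal.ofReal q)⁻¹ = ENNReal.ofReal (1 - q)⁻¹ := by
  rw [← ENNReal.ofReal_one, ← ENNReal.ofReal_sub _ hq0, ENNReal.ofReal_inv_of_pos hq]

lemma expMeasure_Ici {r t : ℝ} (hr : 0 < r) (ht : 0 ≤ t) :
    expMeasure r (Set.Ici t) = expTail r t := by
  have : IsProbabilityMeasure (expMeasure r) := isProbabilityMeasure_expMeasure hr
  have : NullSingletonClass (expMeasure r) := by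
    unfold expMeasure gammaMeasure; infer_instance
  rw [← Set.compl_Iio, prob_compl_eq_one_sub measurableSet_Iio, measure_congr Iio_ae_eq_Iic,
    ← ofReal_cdf, cdf_expMeasure_eq hr, if_pos ht, ENNReal.ofReal_sub _ (exp_pos _).le,
    ENNReal.ofReal_one, ENNReal.sub_sub_cancel ENNReal.one_ne_top]
  · rfl
  exact ENNReal.ofReal_le_one.2 (exp_le_one_iff.2 (neg_nonpos.2 (mul_nonneg hr.le ht)))

lemma setLIntegral_le_of_indepFun_expMeasure {Ω E : Type*} [MeasurableSpace Ω]
    [MeasurableSpace E] {μ : Measure Ω} [IsProbabilityMeasure μ] {S : Ω → ℝ} {X : Ω → E}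
    {r : ℝ} (hr : 0 < r) (hS : Measurable S) (hX : Measurable X) (hSX : IndepFun S X μ)
    (hSexp : μ.map S = expMeasure r) {t : E → ℝ} (ht : Measurable t)
    (ht0 : ∀ ω, 0 ≤ t (X ω)) {ψ : E → ℝ≥0∞} (hψ : Measurable ψ) :
    ∫⁻ ω in {ω | t (X ω) ≤ S ω}, ψ (X ω) ∂μ = ∫⁻ ω, ψ (X ω) * expTail r (t (X ω)) ∂μ := by
  have : IsProbabilityMeasure (expMeasure r) := isProbabilityMeasure_expMeasure hr
  set P : Set (ℝ × E) := {p | t p.2 ≤ p.1}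
  have hP : MeasurableSet P := measurableSet_le (ht.comp measurable_snd) measurable_fst
  have hΦ : Measurable (P.indicator fun p => ψ p.2) := (hψ.comp measurable_snd).indicator hP
  have hjoint : μ.map (fun ω => (S ω, X ω)) = (expMeasure r).prod (μ.map X) := by
    rw [← hSexp]
    exact (indepFun_iff_map_prod_eq_prod_map_map hS.aemeasurable hX.aemeasurable).1 hSX
  have hsection : ∀ x, ∫⁻ s, P.indicator (fun p => ψ p.2) (s, x) ∂expMeasure r
      = ψ x * expMeasure r (Set.Ici (t x)) := fun x => by
    rw [← setLIntegral_const, ← lintegral_indicator measurableSet_Ici]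
    rfl
  calc ∫⁻ ω in {ω | t (X ω) ≤ S ω}, ψ (X ω) ∂μ
      = ∫⁻ ω, P.indicator (fun p => ψ p.2) (S ω, X ω) ∂μ := by
        rw [← lintegral_indicator
          (measurableSet_le (ht.comp hX) hS : MeasurableSet {ω | t (X ω) ≤ S ω})]
        rfl
    _ = ∫⁻ x, ∫⁻ s, P.indicator (fun p => ψ p.2) (s, x) ∂expMeasure r ∂μ.map X := by
        rw [← lintegral_map hΦ (hS.prodMk hX), hjoint, lintegral_prod_symm' _ hΦ]
    _ = ∫⁻ x, ψ x * expTail r (t x) ∂μ.map X := by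
        refine lintegral_congr_ae ?_
        filter_upwards [(ae_map_iff hX.aemeasurable (measurableSet_le measurable_const ht)).2
          (ae_of_all _ ht0)] with x hx
        rw [hsection, expMeasure_Ici hr hx]
    _ = _ := lintegral_map (hψ.mul ((measurable_expTail r).comp ht)) hX

lemma Finset.prod_insert_update {ι α M : Type*} [DecidableEq ι] [CommMonoid M] {s : Finset ι}
    {i : ι} (hi : i ∉ s) (f : ι → α) (a : α) (F : ι → α → M) :
    ∏ l ∈ insert i s, F l (Function.update f i a l) = F i a * ∏ l ∈ s, F l (f l) := by
  rw [prod_insert hi, Function.update_self]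
  congr 1
  exact prod_congr rfl fun l hl => by rw [Function.update_of_ne (ne_of_mem_of_not_mem hl hi)]

lemma measurable_update_apply {ι β γ : Type*} [DecidableEq ι] [MeasurableSpace β]
    [MeasurableSpace γ] {f : ι → β → γ} (hf : ∀ l, Measurable (f l)) {g : β → γ}
    (hg : Measurable g) (i l : ι) : Measurable (Function.update f i g l) := by
  rcases eq_or_ne l i with rfl | hl
  · simpa using hg
  · simpa [hl] using hf l

section IID

variable {Ω β ι : Type*} [MeasurableSpace Ω] [MeasurableSpace β] {μ : Measure Ω}
  {Y : ι → Ω → β} {X : Ω → β}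

lemma lintegral_prod_comp_of_identDistrib (hY : ∀ i, Measurable (Y i))
    (hind : iIndepFun Y μ) (hid : ∀ i, IdentDistrib (Y i) X μ μ) {f : ι → β → ℝ≥0∞}
    (hf : ∀ i, Measurable (f i)) (s : Finset ι) :
    ∫⁻ ω, ∏ i ∈ s, f i (Y i ω) ∂μ = ∏ i ∈ s, ∫⁻ ω, f i (X ω) ∂μ :=
  (lintegral_prod_eq_prod_lintegral_of_indepFun s (fun i ω => f i (Y i ω)) (hind.comp f hf)
    fun i => (hf i).comp (hY i)).trans
    (prod_congr rfl fun i _ => ((hid i).comp (hf i)).lintegral_eq)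

lemma lintegral_mul_prod_comp_of_identDistrib [DecidableEq ι]
    (hY : ∀ i, Measurable (Y i)) (hind : iIndepFun Y μ) (hid : ∀ i, IdentDistrib (Y i) X μ μ)
    {f : ι → β → ℝ≥0∞} (hf : ∀ i, Measurable (f i)) {g : β → ℝ≥0∞} (hg : Measurable g)
    {i : ι} {s : Finset ι} (hi : i ∉ s) :
    ∫⁻ ω, g (Y i ω) * ∏ l ∈ s, f l (Y l ω) ∂μ
      = (∫⁻ ω, g (X ω) ∂μ) * ∏ l ∈ s, ∫⁻ ω, f l (X ω) ∂μ := by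
  have key := lintegral_prod_comp_of_identDistrib hY hind hid (measurable_update_apply hf hg i)
    (insert i s)
  rwa [prod_insert_update hi f g fun l h => ∫⁻ ω, h (X ω) ∂μ,
    lintegral_congr fun ω => prod_insert_update hi f g fun l h => h (Y l ω)] at key

end IID

lemma Finset.sq_sum_range {R : Type*} [CommSemiring R] (x : ℕ → R) (n : ℕ) :
    (∑ j ∈ range n, x j) ^ 2 = ∑ j ∈ range n, (x j ^ 2 + 2 * ∑ i ∈ range j, x i * x j) := by
  induction n with
  | zero => simp
  | succ n ih => rw [sum_range_succ, sum_range_succ, ← ih, ← sum_mul]; ring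

lemma sum_range_eq_tsum_indicator {α M : Type*} [AddCommMonoid M] [TopologicalSpace M]
    {D : ℕ → Set α} {x : α} {K : ℕ} (hK : ∀ j, j < K ↔ x ∈ D j) (f : ℕ → α → M) :
    ∑ j ∈ range K, f j x = ∑' j, (D j).indicator (f j) x := by
  classical
  rw [sum_eq_tsum_indicator]
  refine tsum_congr fun j => ?_
  simp only [Set.indicator_apply, coe_range, Set.mem_Iio, hK]

lemma ENNReal.tsum_natCast_mul_pow_sub_one (x : ℝ≥0∞) :
    ∑' n : ℕ, (n : ℝ≥0∞) * x ^ (n - 1) = (1 - x)⁻¹ ^ 2 := by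
  calc ∑' n : ℕ, (n : ℝ≥0∞) * x ^ (n - 1)
      = ∑' n : ℕ, ∑' i : ℕ, (Set.Iio n).indicator (fun _ => x ^ (n - 1)) i := by
        refine tsum_congr fun n => ?_
        rw [← coe_range, ← sum_eq_tsum_indicator]
        simp
    _ = ∑' i : ℕ, ∑' n : ℕ, (Set.Iio n).indicator (fun _ => x ^ (n - 1)) i := ENNReal.tsum_comm
    _ = ∑' i : ℕ, x ^ i * (1 - x)⁻¹ := by
        refine tsum_congr fun i => ?_
        have hhead : ∑ n ∈ range (i + 1), (Set.Iio n).indicator (fun _ => x ^ (n - 1)) i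
            = 0 := sum_eq_zero fun n hn =>
          Set.indicator_of_notMem (by simp only [mem_range] at hn; simpa using hn) _
        have htail : ∀ d, (Set.Iio (d + (i + 1))).indicator (fun _ => x ^ (d + (i + 1) - 1)) i
            = x ^ i * x ^ d := fun d => by
          rw [Set.indicator_of_mem (by simp only [Set.mem_Iio]; omega), ← pow_add]
          congr 1
          omega
        rw [← (ENNReal.summable (f := fun n => _)).sum_add_tsum_nat_add' (k := i + 1), hhead,
          zero_add, tsum_congr htail, ENNReal.tsum_mul_left, ENNReal.tsum_geometric]
    _ = (1 - x)⁻¹ ^ 2 := by rw [ENNReal.tsum_mul_right, ENNReal.tsum_geometric, sq]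

lemma Nat.lt_sInf_iff_le_of_monotone {a : ℕ → ℝ} (ha : Monotone a) {s : ℝ} (h0 : a 0 ≤ s)
    (hne : ∃ n, s < a n) (j : ℕ) : j < sInf {k | 1 ≤ k ∧ s < a k} ↔ a j ≤ s := by
  have hmem : ∀ {k}, s < a k → k ∈ {k | 1 ≤ k ∧ s < a k} := fun {k} hk =>
    ⟨Nat.one_le_iff_ne_zero.2 fun h => by subst h; linarith, hk⟩
  constructor
  · intro hj
    by_contra! h
    exact (Nat.sInf_le (hmem h)).not_gt hj
  · intro hj
    by_contra! h
    obtain ⟨n, hn⟩ := hne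
    exact (Nat.sInf_mem ⟨n, hmem hn⟩).2.not_ge ((ha h).trans hj)

section GM11

variable {Ω : Type*}

def arrivalTime (Y : ℕ → Ω → ℝ) (n : ℕ) (ω : Ω) : ℝ := ∑ j ∈ range n, Y j ω

noncomputable def blockingIndex (Y : ℕ → Ω → ℝ) (S : Ω → ℝ) (ω : Ω) : ℕ :=
  sInf {k | 1 ≤ k ∧ S ω < arrivalTime Y k ω}

noncomputable def effectiveInterarrival (Y : ℕ → Ω → ℝ) (S : Ω → ℝ) (ω : Ω) : ℝ :=
  arrivalTime Y (blockingIndex Y S ω) ω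

variable {Y : ℕ → Ω → ℝ} {S : Ω → ℝ} {r : ℝ}

lemma measurable_arrivalTime [MeasurableSpace Ω] (hY : ∀ i, Measurable (Y i)) (n : ℕ) :
    Measurable (arrivalTime Y n) :=
  Finset.measurable_sum _ fun j _ => hY j

lemma monotone_arrivalTime (hY : ∀ i ω, 0 ≤ Y i ω) (ω : Ω) :
    Monotone fun n => arrivalTime Y n ω := fun _ _ hmn =>
  sum_le_sum_of_subset_of_nonneg (range_subset_range.2 hmn) fun i _ _ => hY i ω

lemma arrivalTime_nonneg (hY : ∀ i ω, 0 ≤ Y i ω) (n : ℕ) (ω : Ω) : 0 ≤ arrivalTime Y n ω :=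
  sum_nonneg fun i _ => hY i ω

lemma effectiveInterarrival_nonneg (hY : ∀ i ω, 0 ≤ Y i ω) (ω : Ω) :
    0 ≤ effectiveInterarrival Y S ω :=
  arrivalTime_nonneg hY _ ω

lemma ofReal_effectiveInterarrival (hY : ∀ i ω, 0 ≤ Y i ω) (ω : Ω) :
    ENNReal.ofReal (effectiveInterarrival Y S ω)
      = ∑ j ∈ range (blockingIndex Y S ω), ENNReal.ofReal (Y j ω) :=
  ENNReal.ofReal_sum_of_nonneg (s := range (blockingIndex Y S ω)) fun j _ => hY j ω

variable [MeasureSpace Ω]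

structure IsGM11 (Y : ℕ → Ω → ℝ) (S : Ω → ℝ) (r : ℝ) : Prop where
  rate_pos : 0 < r
  measurable_Y : ∀ i, Measurable (Y i)
  measurable_S : Measurable S
  pos_Y : ∀ i ω, 0 < Y i ω
  identDistrib_Y : ∀ i, IdentDistrib (Y i) (Y 0) ℙ ℙ
  iIndepFun_Y : iIndepFun Y ℙ
  indepFun_S_Y : IndepFun S (fun ω i => Y i ω) ℙ
  map_S : (ℙ : Measure Ω).map S = expMeasure r

namespace IsGM11

lemma nonneg_Y (h : IsGM11 Y S r) (i : ℕ) (ω : Ω) : 0 ≤ Y i ω := (h.pos_Y i ω).le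

lemma norm_exp_neg_mul_le_one (h : IsGM11 Y S r) (ω : Ω) : ‖exp (-(r * Y 0 ω))‖ ≤ 1 := by
  rw [norm_of_nonneg (exp_pos _).le, exp_le_one_iff, neg_nonpos]
  exact mul_nonneg h.rate_pos.le (h.nonneg_Y 0 ω)

lemma measurableSet_arrivalTime_le (h : IsGM11 Y S r) (n : ℕ) :
    MeasurableSet {ω | arrivalTime Y n ω ≤ S ω} :=
  measurableSet_le (measurable_arrivalTime h.measurable_Y n) h.measurable_S

lemma lintegral_expTail_lt_one [IsProbabilityMeasure (ℙ : Measure Ω)] (h : IsGM11 Y S r) :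
    ∫⁻ ω, expTail r (Y 0 ω) < 1 := by
  have hlt : ∀ ω, expTail r (Y 0 ω) < 1 := fun ω => expTail_lt_one h.rate_pos (h.pos_Y 0 ω)
  calc ∫⁻ ω, expTail r (Y 0 ω) < ∫⁻ _, 1 :=
        lintegral_strict_mono (IsProbabilityMeasure.ne_zero _) aemeasurable_const
          (ne_top_of_le_ne_top (by simp) (lintegral_mono fun ω => (hlt ω).le))
          (ae_of_all _ hlt)
    _ = 1 := by simp

lemma ae_nonneg_S (h : IsGM11 Y S r) : ∀ᵐ ω, 0 ≤ S ω := by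
  have : IsProbabilityMeasure (expMeasure r) := isProbabilityMeasure_expMeasure h.rate_pos
  have hexp : ∀ᵐ s ∂expMeasure r, 0 ≤ s := by
    change expMeasure r (Set.Ici 0)ᶜ = 0
    rw [prob_compl_eq_zero_iff measurableSet_Ici, expMeasure_Ici h.rate_pos le_rfl]
    simp [expTail]
  exact ae_of_ae_map h.measurable_S.aemeasurable (h.map_S ▸ hexp)

variable [IsProbabilityMeasure (ℙ : Measure Ω)]

lemma setLIntegral_arrivalTime_le (h : IsGM11 Y S r) {ψ : (ℕ → ℝ) → ℝ≥0∞}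
    (hψ : Measurable ψ) (n : ℕ) :
    ∫⁻ ω in {ω | arrivalTime Y n ω ≤ S ω}, ψ (fun i => Y i ω)
      = ∫⁻ ω, ψ (fun i => Y i ω) * ∏ l ∈ range n, expTail r (Y l ω) := by
  refine (setLIntegral_le_of_indepFun_expMeasure h.rate_pos h.measurable_S
    (measurable_pi_lambda _ h.measurable_Y) h.indepFun_S_Y h.map_S
    (t := fun y => ∑ l ∈ range n, y l) (Finset.measurable_sum _ fun l _ => measurable_pi_apply l)
    (arrivalTime_nonneg h.nonneg_Y n) hψ).trans (lintegral_congr fun ω => ?_)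
  rw [expTail_sum]

lemma measure_arrivalTime_le (h : IsGM11 Y S r) (n : ℕ) :
    ℙ {ω | arrivalTime Y n ω ≤ S ω} = (∫⁻ ω, expTail r (Y 0 ω)) ^ n := by
  rw [← setLIntegral_one, h.setLIntegral_arrivalTime_le (ψ := fun _ => 1) measurable_const]
  simp only [one_mul]
  rw [lintegral_prod_comp_of_identDistrib h.measurable_Y h.iIndepFun_Y h.identDistrib_Y
    (fun _ => measurable_expTail r), prod_const, card_range]

lemma setLIntegral_arrivalTime_le_comp (h : IsGM11 Y S r) {g : ℝ → ℝ≥0∞} (hg : Measurable g)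
    (j : ℕ) :
    ∫⁻ ω in {ω | arrivalTime Y j ω ≤ S ω}, g (Y j ω)
      = (∫⁻ ω, g (Y 0 ω)) * (∫⁻ ω, expTail r (Y 0 ω)) ^ j := by
  rw [h.setLIntegral_arrivalTime_le (ψ := fun y => g (y j)) (hg.comp (measurable_pi_apply j)),
    lintegral_mul_prod_comp_of_identDistrib h.measurable_Y h.iIndepFun_Y h.identDistrib_Y
      (fun _ => measurable_expTail r) hg notMem_range_self, prod_const, card_range]

lemma setLIntegral_arrivalTime_le_mul (h : IsGM11 Y S r) {g g' : ℝ → ℝ≥0∞} (hg : Measurable g)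
    (hg' : Measurable g') {i j : ℕ} (hij : i < j) :
    ∫⁻ ω in {ω | arrivalTime Y j ω ≤ S ω}, g (Y i ω) * g' (Y j ω)
      = (∫⁻ ω, g (Y 0 ω) * expTail r (Y 0 ω)) * (∫⁻ ω, g' (Y 0 ω))
        * (∫⁻ ω, expTail r (Y 0 ω)) ^ (j - 1) := by
  have hi : i ∈ range j := mem_range.2 hij
  have hi' : i ∉ (range j).erase i := notMem_erase i _
  set w : ℕ → ℝ → ℝ≥0∞ := Function.update (fun _ => expTail r) i fun x => g x * expTail r x
    with hw_def
  have hw : ∀ l, Measurable (w l) := measurable_update_apply (fun _ => measurable_expTail r)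
    (hg.mul (measurable_expTail r)) i
  have hpt : ∀ ω, g (Y i ω) * g' (Y j ω) * ∏ l ∈ range j, expTail r (Y l ω)
      = g' (Y j ω) * ∏ l ∈ range j, w l (Y l ω) := fun ω => by
    rw [hw_def, ← insert_erase hi, prod_insert hi',
      prod_insert_update hi' _ (fun x => g x * expTail r x) fun l f => f (Y l ω)]
    ring
  rw [h.setLIntegral_arrivalTime_le (ψ := fun y => g (y i) * g' (y j))
      ((hg.comp (measurable_pi_apply i)).mul (hg'.comp (measurable_pi_apply j))),
    lintegral_congr hpt, lintegral_mul_prod_comp_of_identDistrib h.measurable_Y h.iIndepFun_Y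
      h.identDistrib_Y hw hg' notMem_range_self, hw_def, ← insert_erase hi,
    prod_insert_update hi' _ (fun x => g x * expTail r x) fun l f => ∫⁻ ω, f (Y 0 ω),
    prod_const, card_erase_of_mem hi, card_range]
  ring

lemma ae_exists_lt_arrivalTime (h : IsGM11 Y S r) : ∀ᵐ ω, ∃ n, S ω < arrivalTime Y n ω := by
  simp only [ae_iff, not_exists, not_lt]
  refine le_antisymm (ge_of_tendsto'
    (ENNReal.tendsto_pow_atTop_nhds_zero_of_lt_one h.lintegral_expTail_lt_one) fun n => ?_)
    zero_le
  rw [← h.measure_arrivalTime_le n]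
  exact measure_mono fun ω hω => hω n

lemma ae_lt_blockingIndex_iff (h : IsGM11 Y S r) :
    ∀ᵐ ω, ∀ j, j < blockingIndex Y S ω ↔ ω ∈ {ω | arrivalTime Y j ω ≤ S ω} := by
  filter_upwards [h.ae_nonneg_S, h.ae_exists_lt_arrivalTime] with ω hS hne j
  exact Nat.lt_sInf_iff_le_of_monotone (monotone_arrivalTime h.nonneg_Y ω)
    (by simpa [arrivalTime] using hS) hne j

lemma lintegral_sum_range_blockingIndex (h : IsGM11 Y S r) {f : ℕ → Ω → ℝ≥0∞}
    (hf : ∀ j, Measurable (f j)) :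
    ∫⁻ ω, ∑ j ∈ range (blockingIndex Y S ω), f j ω
      = ∑' j, ∫⁻ ω in {ω | arrivalTime Y j ω ≤ S ω}, f j ω := by
  rw [lintegral_congr_ae (h.ae_lt_blockingIndex_iff.mono fun ω hω =>
      sum_range_eq_tsum_indicator hω f),
    lintegral_tsum fun j => ((hf j).indicator (h.measurableSet_arrivalTime_le j)).aemeasurable]
  exact tsum_congr fun j => lintegral_indicator (h.measurableSet_arrivalTime_le j) _

lemma lintegral_ofReal_effectiveInterarrival (h : IsGM11 Y S r) :
    ∫⁻ ω, ENNReal.ofReal (effectiveInterarrival Y S ω)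
      = (∫⁻ ω, ENNReal.ofReal (Y 0 ω)) * (1 - ∫⁻ ω, expTail r (Y 0 ω))⁻¹ := by
  simp_rw [ofReal_effectiveInterarrival h.nonneg_Y]
  rw [h.lintegral_sum_range_blockingIndex fun j => (h.measurable_Y j).ennreal_ofReal]
  simp_rw [h.setLIntegral_arrivalTime_le_comp ENNReal.measurable_ofReal]
  rw [ENNReal.tsum_mul_left, ENNReal.tsum_geometric]

lemma lintegral_ofReal_effectiveInterarrival_sq (h : IsGM11 Y S r) :
    ∫⁻ ω, ENNReal.ofReal (effectiveInterarrival Y S ω ^ 2)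
      = (∫⁻ ω, ENNReal.ofReal (Y 0 ω) ^ 2) * (1 - ∫⁻ ω, expTail r (Y 0 ω))⁻¹
        + 2 * ((∫⁻ ω, ENNReal.ofReal (Y 0 ω) * expTail r (Y 0 ω)) * ∫⁻ ω, ENNReal.ofReal (Y 0 ω))
          * (1 - ∫⁻ ω, expTail r (Y 0 ω))⁻¹ ^ 2 := by
  set Q := ∫⁻ ω, expTail r (Y 0 ω)
  have hY := h.measurable_Y
  have hterm : ∀ j, ∫⁻ ω in {ω | arrivalTime Y j ω ≤ S ω}, (ENNReal.ofReal (Y j ω) ^ 2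
        + 2 * ∑ i ∈ range j, ENNReal.ofReal (Y i ω) * ENNReal.ofReal (Y j ω))
      = (∫⁻ ω, ENNReal.ofReal (Y 0 ω) ^ 2) * Q ^ j
        + 2 * ((∫⁻ ω, ENNReal.ofReal (Y 0 ω) * expTail r (Y 0 ω)) * ∫⁻ ω, ENNReal.ofReal (Y 0 ω))
          * (j * Q ^ (j - 1)) := fun j => by
    rw [lintegral_add_left (by fun_prop), lintegral_const_mul _ (by fun_prop),
      lintegral_finsetSum _ fun i _ => by fun_prop,
      h.setLIntegral_arrivalTime_le_comp (ENNReal.measurable_ofReal.pow_const 2),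
      sum_congr rfl fun i hi => h.setLIntegral_arrivalTime_le_mul ENNReal.measurable_ofReal
        ENNReal.measurable_ofReal (mem_range.1 hi), sum_const, card_range, nsmul_eq_mul]
    ring
  simp_rw [ENNReal.ofReal_pow (effectiveInterarrival_nonneg h.nonneg_Y _),
    ofReal_effectiveInterarrival h.nonneg_Y, sq_sum_range]
  rw [h.lintegral_sum_range_blockingIndex fun j => by fun_prop]
  simp_rw [hterm]
  rw [ENNReal.tsum_add, ENNReal.tsum_mul_left, ENNReal.tsum_mul_left, ENNReal.tsum_geometric,
    ENNReal.tsum_natCast_mul_pow_sub_one]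

lemma aemeasurable_effectiveInterarrival (h : IsGM11 Y S r) :
    AEMeasurable (effectiveInterarrival Y S) := by
  have hF : Measurable fun ω => ∑' j, {ω | arrivalTime Y j ω ≤ S ω}.indicator
      (fun ω => ENNReal.ofReal (Y j ω)) ω :=
    Measurable.tsum fun j => (h.measurable_Y j).ennreal_ofReal.indicator
      (h.measurableSet_arrivalTime_le j)
  refine hF.ennreal_toReal.aemeasurable.congr ?_
  filter_upwards [h.ae_lt_blockingIndex_iff] with ω hω
  rw [← sum_range_eq_tsum_indicator (D := fun j => {ω | arrivalTime Y j ω ≤ S ω}) hω,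
    ← ofReal_effectiveInterarrival h.nonneg_Y,
    ENNReal.toReal_ofReal (effectiveInterarrival_nonneg h.nonneg_Y ω)]

lemma integrable_exp_neg_mul (h : IsGM11 Y S r) :
    Integrable (fun ω => exp (-(r * Y 0 ω))) :=
  (integrable_const 1).mono'
    (measurable_const.mul (h.measurable_Y 0)).neg.exp.aestronglyMeasurable
    (ae_of_all _ h.norm_exp_neg_mul_le_one)

lemma ofReal_integral_exp_neg_mul (h : IsGM11 Y S r) :
    ENNReal.ofReal (∫ ω, exp (-(r * Y 0 ω))) = ∫⁻ ω, expTail r (Y 0 ω) :=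
  ofReal_integral_eq_lintegral_ofReal h.integrable_exp_neg_mul
    (ae_of_all _ fun _ => (exp_pos _).le)

lemma integral_exp_neg_mul_lt_one (h : IsGM11 Y S r) : ∫ ω, exp (-(r * Y 0 ω)) < 1 :=
  ENNReal.ofReal_lt_one.1 (h.ofReal_integral_exp_neg_mul ▸ h.lintegral_expTail_lt_one)

lemma inv_one_sub_lintegral_expTail (h : IsGM11 Y S r) :
    (1 - ∫⁻ ω, expTail r (Y 0 ω))⁻¹ = ENNReal.ofReal (1 - ∫ ω, exp (-(r * Y 0 ω)))⁻¹ := by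
  rw [← h.ofReal_integral_exp_neg_mul, ENNReal.inv_one_sub_ofReal
    (integral_nonneg fun _ => (exp_pos _).le) (sub_pos.2 h.integral_exp_neg_mul_lt_one)]

lemma lintegral_ofReal_mul_expTail (h : IsGM11 Y S r) (hY1 : Integrable (Y 0)) :
    ∫⁻ ω, ENNReal.ofReal (Y 0 ω) * expTail r (Y 0 ω)
      = ENNReal.ofReal (∫ ω, Y 0 ω * exp (-(r * Y 0 ω))) := by
  rw [ofReal_integral_eq_lintegral_ofReal
    (hY1.mul_bdd h.integrable_exp_neg_mul.aestronglyMeasurable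
      (ae_of_all _ h.norm_exp_neg_mul_le_one))
    (ae_of_all _ fun ω => mul_nonneg (h.nonneg_Y 0 ω) (exp_pos _).le)]
  simp_rw [ENNReal.ofReal_mul (h.nonneg_Y 0 _), expTail]

lemma integral_effectiveInterarrival (h : IsGM11 Y S r) (hY1 : Integrable (Y 0)) :
    ∫ ω, effectiveInterarrival Y S ω = (∫ ω, Y 0 ω) / (1 - ∫ ω, exp (-(r * Y 0 ω))) := by
  have ha : 0 ≤ ∫ ω, Y 0 ω := integral_nonneg (h.nonneg_Y 0)
  have hq : 0 < 1 - ∫ ω, exp (-(r * Y 0 ω)) := sub_pos.2 h.integral_exp_neg_mul_lt_one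
  rw [integral_eq_lintegral_of_nonneg_ae (ae_of_all _ (effectiveInterarrival_nonneg h.nonneg_Y))
      h.aemeasurable_effectiveInterarrival.aestronglyMeasurable,
    h.lintegral_ofReal_effectiveInterarrival, h.inv_one_sub_lintegral_expTail,
    ← ofReal_integral_eq_lintegral_ofReal hY1 (ae_of_all _ (h.nonneg_Y 0)),
    ← ENNReal.ofReal_mul ha, ENNReal.toReal_ofReal (by positivity), div_eq_mul_inv]

lemma integral_effectiveInterarrival_sq (h : IsGM11 Y S r) (hY1 : Integrable (Y 0))
    (hY2 : Integrable fun ω => Y 0 ω ^ 2) :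
    ∫ ω, effectiveInterarrival Y S ω ^ 2
      = (∫ ω, Y 0 ω ^ 2) / (1 - ∫ ω, exp (-(r * Y 0 ω)))
        + 2 * ((∫ ω, Y 0 ω * exp (-(r * Y 0 ω))) * ∫ ω, Y 0 ω)
          / (1 - ∫ ω, exp (-(r * Y 0 ω))) ^ 2 := by
  have hY := h.nonneg_Y 0
  have hq : 0 < 1 - ∫ ω, exp (-(r * Y 0 ω)) := sub_pos.2 h.integral_exp_neg_mul_lt_one
  have hB : ∫⁻ ω, ENNReal.ofReal (Y 0 ω) ^ 2 = ENNReal.ofReal (∫ ω, Y 0 ω ^ 2) := by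
    rw [ofReal_integral_eq_lintegral_ofReal hY2 (ae_of_all _ fun ω => sq_nonneg _)]
    simp_rw [ENNReal.ofReal_pow (hY _)]
  rw [integral_eq_lintegral_of_nonneg_ae (ae_of_all _ fun ω => sq_nonneg _)
      (h.aemeasurable_effectiveInterarrival.pow_const 2).aestronglyMeasurable,
    h.lintegral_ofReal_effectiveInterarrival_sq, h.inv_one_sub_lintegral_expTail, hB,
    h.lintegral_ofReal_mul_expTail hY1,
    ← ofReal_integral_eq_lintegral_ofReal hY1 (ae_of_all _ hY),
    ENNReal.toReal_add (by finiteness) (by finiteness)]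
  simp only [ENNReal.toReal_mul, ENNReal.toReal_pow, ENNReal.toReal_ofNat, inv_pow,
    ENNReal.toReal_ofReal (integral_nonneg hY), ENNReal.toReal_ofReal (inv_nonneg.2 hq.le),
    ENNReal.toReal_ofReal (integral_nonneg fun ω => sq_nonneg (Y 0 ω)),
    ENNReal.toReal_ofReal (integral_nonneg fun ω => mul_nonneg (hY ω) (exp_pos _).le)]
  ring

end IsGM11

end GM11

theorem blocking_GM11_exact_age_general
    {Ω : Type*} [MeasureSpace Ω] [IsProbabilityMeasure (ℙ : Measure Ω)]
    (Y : ℕ → Ω → ℝ) (S : Ω → ℝ) (μr : ℝ) (hμ : 0 < μr)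
    (hYmeas : ∀ i, Measurable (Y i))
    (hSmeas : Measurable S)
    (hYpos : ∀ i ω, 0 < Y i ω)
    (hYid : ∀ i, IdentDistrib (Y i) (Y 0) ℙ ℙ)
    (hYindep : iIndepFun Y ℙ)
    (hSY : IndepFun S (fun ω i => Y i ω) ℙ)
    (hY1 : Integrable (Y 0) ℙ)
    (hY2 : Integrable (fun ω => (Y 0 ω) ^ 2) ℙ)
    -- `S` is exponentially distributed with rate `μ`
    (hSexp : Measure.map S ℙ = expMeasure μr)
    (A : ℕ → Ω → ℝ) (hA : ∀ k ω, A k ω = ∑ j ∈ Finset.range k, Y j ω)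
    (K : Ω → ℕ) (hK : ∀ ω, K ω = sInf {k | 1 ≤ k ∧ S ω < A k ω})
    (G : Ω → ℝ) (hG : ∀ ω, G ω = A (K ω) ω) :
    (∫ ω, (G ω) ^ 2 ∂ℙ) / (2 * ∫ ω, G ω ∂ℙ) + 1 / μr
      = (∫ ω, (Y 0 ω) ^ 2 ∂ℙ) / (2 * ∫ ω, Y 0 ω ∂ℙ)
        + (∫ ω, Y 0 ω * Real.exp (-(μr * Y 0 ω)) ∂ℙ)
          / (1 - ∫ ω, Real.exp (-(μr * Y 0 ω)) ∂ℙ)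
        + 1 / μr := by
  obtain rfl : A = arrivalTime Y := funext fun k => funext (hA k)
  obtain rfl : K = blockingIndex Y S := funext hK
  obtain rfl : G = effectiveInterarrival Y S := funext hG
  have h : IsGM11 Y S μr := ⟨hμ, hYmeas, hSmeas, hYpos, hYid, hYindep, hSY, hSexp⟩
  have ha : 0 < ∫ ω, Y 0 ω := (integral_pos_iff_support_of_nonneg (h.nonneg_Y 0) hY1).2 (by
    simp [Function.support, fun ω => (hYpos 0 ω).ne'])
  have hq : 1 - ∫ ω, exp (-(μr * Y 0 ω)) ≠ 0 := (sub_pos.2 h.integral_exp_neg_mul_lt_one).ne'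
  rw [h.integral_effectiveInterarrival hY1, h.integral_effectiveInterarrival_sq hY1 hY2]
  field_simp

/-- **Blocking G/M/1/1, exact age (Theorem 2).**
If the service time `S` is exponential with rate `μ > 0`, then the average age
`Δᵇ = E[G²]/(2E[G]) + 1/μ` equals
`E[Y²]/(2E[Y]) + E[Y e^{-μY}]/(1 - E[e^{-μY}]) + 1/μ`. -/
theorem blocking_GM11_exact_age
    {Ω : Type*} [MeasureSpace Ω] [IsProbabilityMeasure (ℙ : Measure Ω)]
    (Y : ℕ → Ω → ℝ) (S : Ω → ℝ) (μr : ℝ) (hμ : 0 < μr)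
    (hYmeas : ∀ i, Measurable (Y i))
    (hSmeas : Measurable S)
    (hYpos : ∀ i ω, 0 < Y i ω)
    (hSpos : ∀ ω, 0 < S ω)
    (hYid : ∀ i, IdentDistrib (Y i) (Y 0) ℙ ℙ)
    (hYindep : iIndepFun Y ℙ)
    (hSY : IndepFun S (fun ω i => Y i ω) ℙ)
    (hY1 : Integrable (Y 0) ℙ)
    (hY2 : Integrable (fun ω => (Y 0 ω) ^ 2) ℙ)
    -- `S` is exponentially distributed with rate `μ`
    (hSexp : Measure.map S ℙ = expMeasure μr)
    (A : ℕ → Ω → ℝ) (hA : ∀ k ω, A k ω = ∑ j ∈ Finset.range k, Y j ω)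
    (K : Ω → ℕ) (hK : ∀ ω, K ω = sInf {k | 1 ≤ k ∧ S ω < A k ω})
    (G : Ω → ℝ) (hG : ∀ ω, G ω = A (K ω) ω) :
    (∫ ω, (G ω) ^ 2 ∂ℙ) / (2 * ∫ ω, G ω ∂ℙ) + 1 / μr
      = (∫ ω, (Y 0 ω) ^ 2 ∂ℙ) / (2 * ∫ ω, Y 0 ω ∂ℙ)
        + (∫ ω, Y 0 ω * Real.exp (-(μr * Y 0 ω)) ∂ℙ)
          / (1 - ∫ ω, Real.exp (-(μr * Y 0 ω)) ∂ℙ)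
        + 1 / μr :=
  blocking_GM11_exact_age_general Y S μr hμ hYmeas hSmeas hYpos hYid hYindep hSY hY1 hY2 hSexp A hA
    K hK G hG
end

section
/- Let Y be a nonnegative NBUE random variable with finite mean E[Y] > 0. Then its Laplace transform satisfies E[e^{-ωY}] ≤ 1/(1 + ω·E[Y]) for all ω ≥ 0. -/
open MeasureTheory ProbabilityTheory Real

lemma nbue_aux_split {y : ℝ} (hy : 0 ≤ y) {f : ℝ → ℝ} (h0 : ∀ t, y < t → f t = 0)
    (hi : IntegrableOn f (Set.Ioc 0 y)) :
    ∫ t in Set.Ioi (0:ℝ), f t = ∫ t in Set.Ioc (0:ℝ) y, f t := by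
  rw [← Set.Ioc_union_Ioi_eq_Ioi hy,
    setIntegral_union (Set.Ioc_disjoint_Ioi le_rfl) measurableSet_Ioi hi
      (((integrableOn_congr_fun (fun t ht => h0 t ht) measurableSet_Ioi)).2
        (integrableOn_zero)),
    setIntegral_congr_fun measurableSet_Ioi (fun t ht => h0 t ht)]
  simp

lemma nbue_aux_int1 {w y : ℝ} (hw : 0 < w) (hy : 0 ≤ y) :
    ∫ t in Set.Ioi (0:ℝ), Real.exp (-(w*t)) * max (y - t) 0
      = (w*y - 1 + Real.exp (-(w*y))) / w^2 := by
  have hcont : Continuous fun t : ℝ => Real.exp (-(w*t)) * (y - t) :=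
    (Real.continuous_exp.comp (continuous_const.mul continuous_id).neg).mul
      (continuous_const.sub continuous_id)
  have hcont' : Continuous fun t : ℝ => Real.exp (-(w*t)) * max (y - t) 0 :=
    (Real.continuous_exp.comp (continuous_const.mul continuous_id).neg).mul
      ((continuous_const.sub continuous_id).max continuous_const)
  rw [nbue_aux_split hy (fun t ht => by
      rw [max_eq_right (by linarith), mul_zero]) hcont'.integrableOn_Ioc]
  rw [setIntegral_congr_fun measurableSet_Ioc
    (g := fun t : ℝ => Real.exp (-(w*t)) * (y - t))
    (fun t ht => by rw [max_eq_left (by linarith [ht.2])]),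
    ← intervalIntegral.integral_of_le hy]
  have key := intervalIntegral.integral_eq_sub_of_hasDerivAt
    (f := fun t : ℝ => Real.exp (-(w*t)) * (1/w^2 - y/w + t/w))
    (f' := fun t : ℝ => Real.exp (-(w*t)) * (y - t)) (a := 0) (b := y)
    (fun x _ => by
      have h1 : HasDerivAt (fun t : ℝ => -(w*t)) (-w) x := by
        have h := ((hasDerivAt_id x).const_mul w).neg
        simp only [mul_one] at h
        exact h
      have h2 := h1.exp
      have h3 : HasDerivAt (fun t : ℝ => 1/w^2 - y/w + t/w) (1/w) x :=
        ((hasDerivAt_id x).div_const w).const_add _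
      have h4 := h2.mul h3
      refine h4.congr_deriv ?_
      field_simp
      ring)
    (hcont.intervalIntegrable _ _)
  rw [key]
  simp only [mul_zero, neg_zero, Real.exp_zero, one_mul]
  field_simp
  ring

lemma nbue_aux_int2 {w y : ℝ} (hw : 0 < w) (hy : 0 ≤ y) :
    ∫ t in Set.Ioi (0:ℝ), Real.exp (-(w*t)) * (if t < y then (1:ℝ) else 0)
      = (1 - Real.exp (-(w*y))) / w := by
  have hcont : Continuous fun t : ℝ => Real.exp (-(w*t)) :=
    Real.continuous_exp.comp (continuous_const.mul continuous_id).neg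
  have hmeas : Measurable fun t : ℝ => Real.exp (-(w*t)) * (if t < y then (1:ℝ) else 0) :=
    hcont.measurable.mul (Measurable.ite measurableSet_Iio measurable_const measurable_const)
  have hi : IntegrableOn (fun t : ℝ => Real.exp (-(w*t)) * (if t < y then (1:ℝ) else 0))
      (Set.Ioc 0 y) := by
    refine Integrable.mono' (hcont.integrableOn_Ioc) hmeas.aestronglyMeasurable
      (ae_of_all _ fun t => ?_)
    rw [norm_mul]
    by_cases h : t < y <;>
      simp [h, abs_of_nonneg (Real.exp_pos _).le, (Real.exp_pos _).le]
  rw [nbue_aux_split hy (fun t ht => by rw [if_neg (by linarith), mul_zero]) hi,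
    integral_Ioc_eq_integral_Ioo,
    setIntegral_congr_fun measurableSet_Ioo (g := fun t : ℝ => Real.exp (-(w*t)))
      (fun t ht => by rw [if_pos ht.2, mul_one]),
    ← integral_Ioc_eq_integral_Ioo, ← intervalIntegral.integral_of_le hy]
  have key := intervalIntegral.integral_eq_sub_of_hasDerivAt
    (f := fun t : ℝ => -Real.exp (-(w*t)) / w)
    (f' := fun t : ℝ => Real.exp (-(w*t))) (a := 0) (b := y)
    (fun x _ => by
      have h1 : HasDerivAt (fun t : ℝ => -(w*t)) (-w) x := by
        have h := ((hasDerivAt_id x).const_mul w).neg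
        simp only [mul_one] at h
        exact h
      have h2 := (h1.exp.neg).div_const w
      refine h2.congr_deriv ?_
      field_simp)
    (hcont.intervalIntegrable _ _)
  rw [key]
  simp only [mul_zero, neg_zero, Real.exp_zero]
  ring

/-- **Laplace transform bound for NBUE random variables.**
If `Y` is a nonnegative NBUE random variable (its mean residual life never exceeds its
mean) with finite mean `E[Y] > 0`, then `E[e^{-ωY}] ≤ 1/(1 + ω E[Y])` for all `ω ≥ 0`. -/
theorem nbue_laplace_bound
    {Ω : Type*} [MeasureSpace Ω] [IsProbabilityMeasure (ℙ : Measure Ω)]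
    (Y : Ω → ℝ)
    (hYmeas : Measurable Y)
    (hYnonneg : ∀ ω, 0 ≤ Y ω)
    (hY1 : Integrable Y ℙ)
    (hYmean_pos : 0 < ∫ ω, Y ω ∂ℙ)
    -- NBUE: `E[Y - t | Y > t] ≤ E[Y]` for all `t ≥ 0` with `P(Y > t) > 0`
    (hNBUE : ∀ t : ℝ, 0 ≤ t → ℙ {ω | t < Y ω} ≠ 0 →
      (∫ ω in {ω | t < Y ω}, (Y ω - t) ∂ℙ) / (ℙ {ω | t < Y ω}).toReal
        ≤ ∫ ω, Y ω ∂ℙ) :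
    ∀ w : ℝ, 0 ≤ w →
      (∫ ω, Real.exp (-(w * Y ω)) ∂ℙ) ≤ 1 / (1 + w * ∫ ω, Y ω ∂ℙ) := by
  intro w hw
  rcases hw.eq_or_lt with rfl | hwpos
  · simp
  set μY : ℝ := ∫ ω, Y ω ∂ℙ with hμY
  set φ : ℝ := ∫ ω, Real.exp (-(w * Y ω)) ∂ℙ with hφ
  -- basic integrability facts
  have hexpY : Integrable (fun ω => Real.exp (-(w * Y ω))) ℙ := by
    refine Integrable.mono' (integrable_const 1)
      ((hYmeas.const_mul w).neg.exp).aestronglyMeasurable (ae_of_all _ fun ω => ?_)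
    rw [Real.norm_eq_abs, abs_of_nonneg (Real.exp_pos _).le]
    exact Real.exp_le_one_iff.2 (by nlinarith [hYnonneg ω])
  have hexpt : IntegrableOn (fun t : ℝ => Real.exp (-(w*t))) (Set.Ioi (0:ℝ)) := by
    simpa [neg_mul] using exp_neg_integrableOn_Ioi 0 hwpos
  -- the survival function and the stop-loss transform
  set G : ℝ → ℝ := fun t => (ℙ {ω | t < Y ω}).toReal with hG
  have hGanti : Antitone G := fun s t hst =>
    ENNReal.toReal_mono (measure_ne_top _ _)
      (measure_mono fun ω hω => lt_of_le_of_lt hst hω)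
  have hGmeas : Measurable G := hGanti.measurable
  have hGle : ∀ t, G t ≤ 1 := fun t =>
    ENNReal.toReal_mono ENNReal.one_ne_top prob_le_one |>.trans_eq ENNReal.toReal_one
  have hGnn : ∀ t, 0 ≤ G t := fun t => ENNReal.toReal_nonneg
  set A : ℝ → ℝ := fun t => ∫ ω, max (Y ω - t) 0 ∂ℙ with hA
  have hAnn : ∀ t, 0 ≤ A t := fun t => integral_nonneg fun ω => le_max_right _ _
  -- pointwise NBUE inequality: A t ≤ μY * G t for t ≥ 0
  have hkey : ∀ t : ℝ, 0 ≤ t → A t ≤ μY * G t := by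
    intro t ht
    have hset : MeasurableSet {ω | t < Y ω} := measurableSet_lt measurable_const hYmeas
    have hAt : A t = ∫ ω in {ω | t < Y ω}, (Y ω - t) ∂ℙ := by
      rw [← integral_indicator hset]
      refine integral_congr_ae (ae_of_all _ fun ω => ?_)
      by_cases h : t < Y ω
      · simp [Set.indicator_apply, h, max_eq_left (by linarith : (0:ℝ) ≤ Y ω - t)]
      · simp [Set.indicator_apply, h, max_eq_right (by push_neg at h; linarith : Y ω - t ≤ 0)]
    rcases eq_or_ne (ℙ {ω | t < Y ω}) 0 with h0 | h0
    · have : G t = 0 := by simp [hG, h0]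
      rw [hAt, this, mul_zero, Measure.restrict_eq_zero.mpr h0, integral_zero_measure]
    · have hGpos : 0 < G t := ENNReal.toReal_pos h0 (measure_ne_top _ _)
      have hN := hNBUE t ht h0
      rw [div_le_iff₀ hGpos] at hN
      rw [hAt, mul_comm] at *
      exact hN
  -- Fubini identity 1
  have hfub1 : ∫ t in Set.Ioi (0:ℝ), Real.exp (-(w*t)) * A t
      = ∫ ω, (w * Y ω - 1 + Real.exp (-(w * Y ω))) / w^2 ∂ℙ := by
    have hmeasF : Measurable (Function.uncurry fun (t:ℝ) (ω:Ω) =>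
        Real.exp (-(w*t)) * max (Y ω - t) 0) := by
      apply Measurable.mul
      · exact (measurable_fst.const_mul w).neg.exp
      · exact ((hYmeas.comp measurable_snd).sub measurable_fst).max measurable_const
    have hprodeq : (((volume : Measure ℝ).restrict (Set.Ioi 0)).prod (ℙ : Measure Ω))
        = ((volume : Measure ℝ).prod (ℙ : Measure Ω)).restrict (Set.Ioi 0 ×ˢ Set.univ) := by
      rw [← Measure.prod_restrict, Measure.restrict_univ]
    have hprodae : ∀ᵐ z : ℝ × Ω ∂(((volume : Measure ℝ).restrict (Set.Ioi 0)).prod ℙ),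
        0 < z.1 := by
      rw [hprodeq]
      filter_upwards [ae_restrict_mem (measurableSet_Ioi.prod MeasurableSet.univ)] with z hz
      exact hz.1
    have hint : Integrable (Function.uncurry fun (t:ℝ) (ω:Ω) =>
        Real.exp (-(w*t)) * max (Y ω - t) 0)
        (((volume : Measure ℝ).restrict (Set.Ioi 0)).prod ℙ) := by
      refine Integrable.mono' (Integrable.mul_prod hexpt hY1)
        hmeasF.aestronglyMeasurable ?_
      filter_upwards [hprodae] with z hz
      rw [Function.uncurry, Real.norm_eq_abs, abs_of_nonneg
        (mul_nonneg (Real.exp_pos _).le (le_max_right _ _))]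
      have : max (Y z.2 - z.1) 0 ≤ Y z.2 :=
        max_le (by linarith [hz, hYnonneg z.2]) (hYnonneg z.2)
      exact mul_le_mul_of_nonneg_left this (Real.exp_pos _).le
    have step1 : ∀ t : ℝ, Real.exp (-(w*t)) * A t
        = ∫ ω, Real.exp (-(w*t)) * max (Y ω - t) 0 ∂ℙ := fun t =>
      (integral_const_mul _ _).symm
    calc ∫ t in Set.Ioi (0:ℝ), Real.exp (-(w*t)) * A t
        = ∫ t in Set.Ioi (0:ℝ), ∫ ω, Real.exp (-(w*t)) * max (Y ω - t) 0 ∂ℙ := by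
          exact integral_congr_ae (ae_of_all _ fun t => step1 t)
      _ = ∫ ω, ∫ t in Set.Ioi (0:ℝ), Real.exp (-(w*t)) * max (Y ω - t) 0 ∂(volume) ∂ℙ :=
          integral_integral_swap hint
      _ = ∫ ω, (w * Y ω - 1 + Real.exp (-(w * Y ω))) / w^2 ∂ℙ := by
          refine integral_congr_ae (ae_of_all _ fun ω => ?_)
          exact nbue_aux_int1 hwpos (hYnonneg ω)
  -- Fubini identity 2
  have hfub2 : ∫ t in Set.Ioi (0:ℝ), Real.exp (-(w*t)) * G t
      = ∫ ω, (1 - Real.exp (-(w * Y ω))) / w ∂ℙ := by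
    have hmeasF : Measurable (Function.uncurry fun (t:ℝ) (ω:Ω) =>
        Real.exp (-(w*t)) * (if t < Y ω then (1:ℝ) else 0)) := by
      apply Measurable.mul
      · exact (measurable_fst.const_mul w).neg.exp
      · exact Measurable.ite (measurableSet_lt measurable_fst (hYmeas.comp measurable_snd))
          measurable_const measurable_const
    have hint : Integrable (Function.uncurry fun (t:ℝ) (ω:Ω) =>
        Real.exp (-(w*t)) * (if t < Y ω then (1:ℝ) else 0))
        (((volume : Measure ℝ).restrict (Set.Ioi 0)).prod ℙ) := by
      refine Integrable.mono' (Integrable.mul_prod hexpt (integrable_const (1:ℝ)))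
        hmeasF.aestronglyMeasurable (ae_of_all _ fun z => ?_)
      rw [Function.uncurry, Real.norm_eq_abs]
      by_cases h : z.1 < Y z.2 <;>
        simp [h, abs_of_nonneg (Real.exp_pos _).le, (Real.exp_pos _).le]
    have step1 : ∀ t : ℝ, Real.exp (-(w*t)) * G t
        = ∫ ω, Real.exp (-(w*t)) * (if t < Y ω then (1:ℝ) else 0) ∂ℙ := by
      intro t
      rw [integral_const_mul]
      congr 1
      have : (fun ω => if t < Y ω then (1:ℝ) else 0)
          = Set.indicator {ω | t < Y ω} (1 : Ω → ℝ) := by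
        ext ω; simp [Set.indicator_apply, Set.mem_setOf_eq]
      rw [hG, this, integral_indicator_one (measurableSet_lt measurable_const hYmeas)]
      rfl
    calc ∫ t in Set.Ioi (0:ℝ), Real.exp (-(w*t)) * G t
        = ∫ t in Set.Ioi (0:ℝ), ∫ ω, Real.exp (-(w*t)) * (if t < Y ω then (1:ℝ) else 0) ∂ℙ :=
          integral_congr_ae (ae_of_all _ fun t => step1 t)
      _ = ∫ ω, ∫ t in Set.Ioi (0:ℝ), Real.exp (-(w*t)) * (if t < Y ω then (1:ℝ) else 0)
            ∂(volume) ∂ℙ := integral_integral_swap hint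
      _ = ∫ ω, (1 - Real.exp (-(w * Y ω))) / w ∂ℙ := by
          refine integral_congr_ae (ae_of_all _ fun ω => ?_)
          exact nbue_aux_int2 hwpos (hYnonneg ω)
  -- compare the two integrals
  have hmono : ∫ t in Set.Ioi (0:ℝ), Real.exp (-(w*t)) * A t
      ≤ ∫ t in Set.Ioi (0:ℝ), Real.exp (-(w*t)) * (μY * G t) := by
    refine integral_mono_of_nonneg (ae_of_all _ fun t =>
      mul_nonneg (Real.exp_pos _).le (hAnn t)) ?_ ?_
    · refine Integrable.mono' (hexpt.const_mul μY)
        (((measurable_id.const_mul w).neg.exp).mul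
          ((hGmeas.const_mul μY))).aestronglyMeasurable (ae_of_all _ fun t => ?_)
      rw [Real.norm_eq_abs, abs_of_nonneg (mul_nonneg (Real.exp_pos _).le
        (mul_nonneg hYmean_pos.le (hGnn t)))]
      calc Real.exp (-(w*t)) * (μY * G t) ≤ Real.exp (-(w*t)) * (μY * 1) := by
            have := mul_le_mul_of_nonneg_left (hGle t) hYmean_pos.le
            exact mul_le_mul_of_nonneg_left this (Real.exp_pos _).le
        _ = μY * Real.exp (-(w*t)) := by ring
    · refine (ae_restrict_iff' measurableSet_Ioi).2 (ae_of_all _ fun t ht => ?_)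
      exact mul_le_mul_of_nonneg_left (hkey t (le_of_lt ht)) (Real.exp_pos _).le
  -- rewrite the right-hand side
  have hrhs : ∫ t in Set.Ioi (0:ℝ), Real.exp (-(w*t)) * (μY * G t)
      = μY * ∫ ω, (1 - Real.exp (-(w * Y ω))) / w ∂ℙ := by
    rw [← hfub2, ← integral_const_mul]
    exact integral_congr_ae (ae_of_all _ fun t => by ring)
  rw [hfub1, hrhs] at hmono
  -- compute both expectations
  have hi1 : Integrable (fun ω => w * Y ω) ℙ := hY1.const_mul w
  have hi2 : Integrable (fun ω => w * Y ω - 1) ℙ := hi1.sub (integrable_const 1)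
  have hL : ∫ ω, (w * Y ω - 1 + Real.exp (-(w * Y ω))) / w^2 ∂ℙ
      = (w * μY - 1 + φ) / w^2 := by
    rw [integral_div]
    congr 1
    rw [integral_add hi2 hexpY, integral_sub hi1 (integrable_const 1), integral_const_mul]
    simp [hμY, hφ, measure_univ]
  have hR : ∫ ω, (1 - Real.exp (-(w * Y ω))) / w ∂ℙ = (1 - φ) / w := by
    rw [integral_div]
    congr 1
    rw [integral_sub (integrable_const 1) hexpY]
    simp [hφ, measure_univ]
  rw [hL, hR] at hmono
  -- final algebra
  have h1 : (0:ℝ) < 1 + w * μY := by nlinarith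
  rw [le_div_iff₀ h1]
  have hw2 : (0:ℝ) < w^2 := by positivity
  rw [div_le_iff₀ hw2] at hmono
  have hmono' : w * μY - 1 + φ ≤ μY * (1 - φ) * w := by
    have : μY * ((1 - φ) / w) * w^2 = μY * (1 - φ) * w := by
      field_simp
    linarith [hmono, this.le, this.ge]
  nlinarith [hmono', hwpos]
end
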